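/- arXiv:2307.11505 — 5 statements merged into one kernel-verified Lean document; each statement's English description precedes it below -/
import Mathlib

section
/- For symmetric positive definite P ∈ ℝ^{n×n}, γ > 0, ε₁ > 0, and matrices Ā ∈ ℝ^{n×n}, D ∈ ℝ^{n×m}, the block matrix [[P⁻¹, 0, I, Āᵀ, 0], [0, γI, 0, 0, Dᵀ], [I, 0, γI, 0, 0], [Ā, 0, 0, (ε₁/(1+ε₁))P, 0], [0, D, 0, 0, (1/ε₁)P]] is positive definite if and only if both (1+ε₁⁻¹)ĀᵀP⁻¹Ā − P⁻¹ + γ⁻¹I ≺ 0 and ε₁DᵀP⁻¹D − γI ≺ 0. -/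
/-!
Schur complement with respect to the positive definite lower-right block
`diag(γI, (ε₁/(1+ε₁))P, (1/ε₁)P)`. Each of its three diagonal pieces meets only one of the two
block rows of the coupling block `[[I, Āᵀ, 0], [0, 0, Dᵀ]]`, so the Schur complement is itself
block diagonal, with blocks `P⁻¹ - γ⁻¹I - (1 + ε₁⁻¹)ĀᵀP⁻¹Ā` and `γI - ε₁DᵀP⁻¹D`.
-/

open Matrix

namespace Matrix

variable {l m p q K : Type*}

theorem posDef_fromBlocks_zero_iff [Fintype l] [Fintype m]
    [CommRing K] [PartialOrder K] [StarRing K] [AddLeftMono K]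
    {A : Matrix l l K} {D : Matrix m m K} :
    (fromBlocks A 0 0 D).PosDef ↔ A.PosDef ∧ D.PosDef := by
  refine ⟨fun h => ⟨h.submatrix Sum.inl_injective, h.submatrix Sum.inr_injective⟩,
    fun ⟨hA, hD⟩ => .of_dotProduct_mulVec_pos ?_ fun v hv => ?_⟩
  · exact isHermitian_fromBlocks_iff.2 ⟨hA.1, by simp, by simp, hD.1⟩
  rw [← Sum.elim_comp_inl_inr v, fromBlocks_mulVec, Function.star_sumElim]
  simp only [Matrix.zero_mulVec, add_zero, zero_add, sumElim_dotProduct_sumElim]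
  by_cases hx : v ∘ Sum.inl = 0
  · have hy : v ∘ Sum.inr ≠ 0 := fun hy => hv <| by
      rw [← Sum.elim_comp_inl_inr v, hx, hy]; simp
    simpa [hx] using hD.dotProduct_mulVec_pos hy
  · exact add_pos_of_pos_of_nonneg (hA.dotProduct_mulVec_pos hx)
      (hD.posSemidef.dotProduct_mulVec_nonneg _)

section Field

variable [Fintype l] [Fintype m] [DecidableEq l] [DecidableEq m] [Field K]

theorem inv_smul_of_ne_zero {c : K} (hc : c ≠ 0) (A : Matrix l l K) :
    (c • A)⁻¹ = c⁻¹ • A⁻¹ := by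
  by_cases hA : IsUnit A.det
  · exact inv_smul' A (Units.mk0 c hc) hA
  · rw [nonsing_inv_apply_not_isUnit A hA, smul_zero, nonsing_inv_apply_not_isUnit]
    simpa [det_smul, hc] using hA

theorem inv_fromBlocks_zero_zero {A : Matrix l l K} {D : Matrix m m K} (hA : IsUnit A)
    (hD : IsUnit D) : (fromBlocks A 0 0 D)⁻¹ = fromBlocks A⁻¹ 0 0 D⁻¹ := by
  simpa using inv_fromBlocks_zero₂₁_of_isUnit_iff A 0 D (iff_of_true hA hD)

theorem posDef_fromBlocks₂₂_iff [PartialOrder K] [StarRing K] [AddLeftMono K]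
    {A : Matrix l l K} {B : Matrix l m K} {D : Matrix m m K} (hD : D.PosDef) :
    (fromBlocks A B Bᴴ D).PosDef ↔ (A - B * D⁻¹ * Bᴴ).PosDef := by
  let := hD.isUnit.invertible
  set U : Matrix (l ⊕ m) (l ⊕ m) K := fromBlocks 1 (B * D⁻¹) 0 1
  have hU : IsUnit U := by simp [U]
  have hUstar : fromBlocks 1 0 (D⁻¹ * Bᴴ) 1 = star U := by
    simp [U, star_eq_conjTranspose, fromBlocks_conjTranspose, conjTranspose_nonsing_inv, hD.1.eq]
  rw [fromBlocks_eq_of_invertible₂₂, invOf_eq_nonsing_inv, hUstar,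
    hU.posDef_star_right_conjugate_iff, posDef_fromBlocks_zero_iff, and_iff_left hD]

end Field

theorem fromBlocks_sub_mul_fromBlocks_mul_transpose_eq [Fintype l] [Fintype p] [Fintype q]
    [DecidableEq l] [CommRing K]
    (X₁ G : Matrix l l K) (X₂ : Matrix m m K) (H : Matrix p p K) (W : Matrix q q K)
    (U : Matrix l p K) (V : Matrix m q K) :
    fromBlocks X₁ 0 0 X₂ -
        fromRows (fromCols (1 : Matrix l l K) (fromCols U (0 : Matrix l q K)))
          (fromCols (0 : Matrix m l K) (fromCols (0 : Matrix m p K) V)) *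
          fromBlocks G 0 0 (fromBlocks H 0 0 W) *
          (fromRows (fromCols (1 : Matrix l l K) (fromCols U (0 : Matrix l q K)))
            (fromCols (0 : Matrix m l K) (fromCols (0 : Matrix m p K) V)))ᵀ =
      fromBlocks (X₁ - G - U * H * Uᵀ) 0 0 (X₂ - V * W * Vᵀ) := by
  simp only [fromRows_fromCols_eq_fromBlocks, fromBlocks_transpose, fromBlocks_multiply,
    transpose_fromCols, fromCols_mul_fromBlocks, fromCols_mul_fromRows, Matrix.mul_zero,
    Matrix.zero_mul, add_zero, zero_add, Matrix.mul_one, Matrix.one_mul, transpose_zero,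
    transpose_one]
  rw [sub_eq_add_neg, fromBlocks_neg, fromBlocks_add]
  congr 1 <;> abel

end Matrix

/-- Schur complement characterisation: the 5×5 block matrix
`[[P⁻¹,0,I,Āᵀ,0],[0,γI,0,0,Dᵀ],[I,0,γI,0,0],[Ā,0,0,(ε₁/(1+ε₁))P,0],[0,D,0,0,(1/ε₁)P]]`
is positive definite iff `(1+ε₁⁻¹)ĀᵀP⁻¹Ā − P⁻¹ + γ⁻¹I ≺ 0` and `ε₁DᵀP⁻¹D − γI ≺ 0`. -/
theorem stmt_5 {n m : ℕ}
    (P : Matrix (Fin n) (Fin n) ℝ) (hP : P.PosDef)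
    (γ ε₁ : ℝ) (hγ : 0 < γ) (hε₁ : 0 < ε₁)
    (Abar : Matrix (Fin n) (Fin n) ℝ) (D : Matrix (Fin n) (Fin m) ℝ) :
    (fromBlocks
      (fromBlocks P⁻¹ 0 0 (γ • (1 : Matrix (Fin m) (Fin m) ℝ)))
      (fromRows
        (fromCols (1 : Matrix (Fin n) (Fin n) ℝ) (fromCols Abarᵀ 0))
        (fromCols 0 (fromCols (0 : Matrix (Fin m) (Fin n) ℝ) Dᵀ)))
      (fromRows
        (fromCols (1 : Matrix (Fin n) (Fin n) ℝ) (fromCols Abarᵀ 0))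
        (fromCols 0 (fromCols (0 : Matrix (Fin m) (Fin n) ℝ) Dᵀ)))ᵀ
      (fromBlocks (γ • (1 : Matrix (Fin n) (Fin n) ℝ)) 0 0
        (fromBlocks ((ε₁ / (1 + ε₁)) • P) 0 0 ((1 / ε₁) • P)))).PosDef
    ↔ ((-((1 + ε₁⁻¹) • (Abarᵀ * P⁻¹ * Abar) - P⁻¹
          + γ⁻¹ • (1 : Matrix (Fin n) (Fin n) ℝ))).PosDef
        ∧ (-(ε₁ • (Dᵀ * P⁻¹ * D) - γ • (1 : Matrix (Fin m) (Fin m) ℝ))).PosDef) := by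
  have hc : 0 < ε₁ / (1 + ε₁) := by positivity
  have hc' : 0 < 1 / ε₁ := one_div_pos.2 hε₁
  have hG : (γ • (1 : Matrix (Fin n) (Fin n) ℝ)).PosDef := PosDef.one.smul hγ
  have hH := hP.smul hc
  have hW := hP.smul hc'
  have hHW := posDef_fromBlocks_zero_iff.2 ⟨hH, hW⟩
  refine (posDef_fromBlocks₂₂_iff (posDef_fromBlocks_zero_iff.2 ⟨hG, hHW⟩)).trans ?_
  rw [conjTranspose_eq_transpose_of_trivial, inv_fromBlocks_zero_zero hG.isUnit hHW.isUnit,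
    inv_fromBlocks_zero_zero hH.isUnit hW.isUnit, inv_smul_of_ne_zero hγ.ne', inv_one,
    inv_smul_of_ne_zero hc.ne', inv_smul_of_ne_zero hc'.ne',
    fromBlocks_sub_mul_fromBlocks_mul_transpose_eq, posDef_fromBlocks_zero_iff]
  have hc_inv : (ε₁ / (1 + ε₁))⁻¹ = 1 + ε₁⁻¹ := by field_simp; ring
  simp only [transpose_transpose, Matrix.mul_smul, Matrix.smul_mul, hc_inv, one_div, inv_inv]
  congr! 2 <;> abel
end

section
/- Let Ω be a symmetric matrix, M ∈ ℝ^{p × T}, N ∈ ℝ^{n_w × T} (embedded as blocks of appropriate size), Δ ∈ ℝ^{n_w × n_w}, and ε₂ > 0. If Ω − ε₂⁻¹·M·Mᵀ − ε₂·Nᵀ·Δ·Δᵀ·N ≻ 0, then for every W ∈ ℝ^{n_w × T} with W·Wᵀ ⪯ Δ·Δᵀ, the matrix Ω − M·Wᵀ·N − Nᵀ·W·Mᵀ is positive definite. -/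
open Matrix

/-! The cross term is absorbed by completing the square: for `ε > 0`,
`A Bᵀ + B Aᵀ ⪯ ε⁻¹ A Aᵀ + ε B Bᵀ`, since the difference is `ε⁻¹ (A - ε B)(A - ε B)ᵀ`.
Taking `A = M`, `B = Nᵀ W` and using `Nᵀ W Wᵀ N ⪯ Nᵀ Δ Δᵀ N`, the matrix
`Ω - M Wᵀ N - Nᵀ W Mᵀ` is the positive definite hypothesis plus two positive semidefinite
matrices. -/

namespace Matrix

theorem posSemidef_young {m n : Type*} [Finite m] [Fintype n] (A B : Matrix m n ℝ) {ε : ℝ}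
    (hε : 0 < ε) :
    (ε⁻¹ • (A * Aᵀ) + ε • (B * Bᵀ) - A * Bᵀ - B * Aᵀ).PosSemidef := by
  have hsq := (posSemidef_self_mul_conjTranspose (A - ε • B)).smul (inv_nonneg.2 hε.le)
  convert hsq using 1
  simp only [conjTranspose_eq_transpose_of_trivial, transpose_sub, transpose_smul,
    Matrix.sub_mul, Matrix.mul_sub, Matrix.smul_mul, Matrix.mul_smul, smul_sub, smul_smul,
    inv_mul_cancel₀ hε.ne', inv_mul_cancel_left₀ hε.ne', one_smul]
  abel

end Matrix

theorem stmt_6_general {p T nw : ℕ}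
    (Ω : Matrix (Fin p) (Fin p) ℝ)
    (M : Matrix (Fin p) (Fin T) ℝ) (N : Matrix (Fin nw) (Fin p) ℝ)
    (Δ : Matrix (Fin nw) (Fin nw) ℝ) (ε₂ : ℝ) (hε₂ : 0 < ε₂)
    (h : (Ω - ε₂⁻¹ • (M * Mᵀ) - ε₂ • (Nᵀ * Δ * Δᵀ * N)).PosDef) :
    ∀ W : Matrix (Fin nw) (Fin T) ℝ, (Δ * Δᵀ - W * Wᵀ).PosSemidef →
      (Ω - M * Wᵀ * N - Nᵀ * W * Mᵀ).PosDef := by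
  intro W hW
  have hcross := posSemidef_young M (Nᵀ * W) hε₂
  have hgap : (ε₂ • (Nᵀ * (Δ * Δᵀ - W * Wᵀ) * N)).PosSemidef := by
    simpa only [conjTranspose_eq_transpose_of_trivial] using
      (hW.conjTranspose_mul_mul_same N).smul hε₂.le
  convert (h.add_posSemidef hcross).add_posSemidef hgap using 1
  simp only [transpose_mul, transpose_transpose, Matrix.mul_sub, Matrix.sub_mul, smul_sub,
    Matrix.mul_assoc]
  abel

/-- If `Ω − ε₂⁻¹ M Mᵀ − ε₂ Nᵀ Δ Δᵀ N ≻ 0`, then for every `W` with `W Wᵀ ⪯ Δ Δᵀ`,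
the matrix `Ω − M Wᵀ N − Nᵀ W Mᵀ` is positive definite. -/
theorem stmt_6 {p T nw : ℕ}
    (Ω : Matrix (Fin p) (Fin p) ℝ) (hΩ : Ω.IsSymm)
    (M : Matrix (Fin p) (Fin T) ℝ) (N : Matrix (Fin nw) (Fin p) ℝ)
    (Δ : Matrix (Fin nw) (Fin nw) ℝ) (ε₂ : ℝ) (hε₂ : 0 < ε₂)
    (h : (Ω - ε₂⁻¹ • (M * Mᵀ) - ε₂ • (Nᵀ * Δ * Δᵀ * N)).PosDef) :
    ∀ W : Matrix (Fin nw) (Fin T) ℝ, (Δ * Δᵀ - W * Wᵀ).PosSemidef →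
      (Ω - M * Wᵀ * N - Nᵀ * W * Mᵀ).PosDef :=
  stmt_6_general Ω M N Δ ε₂ hε₂ h
end

section
/- Suppose K = U₀·G with G = [G₁ G₂] satisfying Z₀·G = I_{n_z}, and the data satisfies X₁ = A·Z₀ + B·U₀ + D·W₀. Then for any x-state z = [x; q] ∈ ℝ^{n_z} (split into x ∈ ℝ^{n_x} and q ∈ ℝ^{n_z−n_x}), the closed-loop update A·z + B·K·z + D·w equals Ā·x + Ē·q + D·w, where Ā = (X₁ − D·W₀)·G₁ and Ē = (X₁ − D·W₀)·G₂. -/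
open Matrix

/-! Substituting the data equation into `A + B K = A + B U₀ G` and using `Z₀ G = 1` eliminates
the unknown `A` and `B`: the closed-loop matrix is `(X₁ - D W₀) G`, and multiplying it by
`[x; q]` splits along the column blocks `G₁`, `G₂`. -/

theorem add_mul_eq_sub_mul_of_data_eq {R : Type*} [CommRing R] {n m p r τ : Type*}
    [Fintype n] [Fintype p] [Fintype r] [Fintype τ] [DecidableEq n]
    {A : Matrix m n R} {B : Matrix m p R} {D : Matrix m r R}
    {U0 : Matrix p τ R} {Z0 : Matrix n τ R} {X1 : Matrix m τ R} {W0 : Matrix r τ R}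
    {G : Matrix τ n R} (hI : Z0 * G = 1) (hdata : X1 = A * Z0 + B * U0 + D * W0) :
    A + B * (U0 * G) = (X1 - D * W0) * G := by
  rw [hdata, add_sub_cancel_right, Matrix.add_mul, Matrix.mul_assoc, hI, Matrix.mul_one,
    Matrix.mul_assoc]

theorem mul_fromCols_mulVec_sumElim {R : Type*} [CommRing R] {m τ n₁ n₂ : Type*}
    [Fintype τ] [Fintype n₁] [Fintype n₂] (M : Matrix m τ R) (G₁ : Matrix τ n₁ R)
    (G₂ : Matrix τ n₂ R) (x : n₁ → R) (q : n₂ → R) :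
    (M * fromCols G₁ G₂) *ᵥ Sum.elim x q = (M * G₁) *ᵥ x + (M * G₂) *ᵥ q := by
  rw [← mulVec_mulVec, fromCols_mulVec_sumElim, mulVec_add, mulVec_mulVec, mulVec_mulVec]

/-- Data-based closed-loop representation: with `K = U₀ [G₁ G₂]`, `Z₀ [G₁ G₂] = I`,
and `X₁ = A Z₀ + B U₀ + D W₀`, the closed-loop update `A z + B K z + D w` on
`z = [x; q]` equals `Ā x + Ē q + D w` with `Ā = (X₁ − D W₀) G₁`, `Ē = (X₁ − D W₀) G₂`. -/
theorem stmt_8 {nx k nu nw T : ℕ}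
    (A : Matrix (Fin nx) (Fin nx ⊕ Fin k) ℝ) (B : Matrix (Fin nx) (Fin nu) ℝ)
    (D : Matrix (Fin nx) (Fin nw) ℝ)
    (U0 : Matrix (Fin nu) (Fin T) ℝ) (Z0 : Matrix (Fin nx ⊕ Fin k) (Fin T) ℝ)
    (X1 : Matrix (Fin nx) (Fin T) ℝ) (W0 : Matrix (Fin nw) (Fin T) ℝ)
    (G₁ : Matrix (Fin T) (Fin nx) ℝ) (G₂ : Matrix (Fin T) (Fin k) ℝ)
    (K : Matrix (Fin nu) (Fin nx ⊕ Fin k) ℝ)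
    (hK : K = U0 * fromCols G₁ G₂)
    (hI : Z0 * fromCols G₁ G₂ = 1)
    (hdata : X1 = A * Z0 + B * U0 + D * W0)
    (x : Fin nx → ℝ) (q : Fin k → ℝ) (w : Fin nw → ℝ) :
    A.mulVec (Sum.elim x q) + B.mulVec (K.mulVec (Sum.elim x q)) + D.mulVec w
      = ((X1 - D * W0) * G₁).mulVec x + ((X1 - D * W0) * G₂).mulVec q + D.mulVec w := by
  have hclosed : A + B * K = (X1 - D * W0) * fromCols G₁ G₂ :=
    hK ▸ add_mul_eq_sub_mul_of_data_eq hI hdata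
  rw [mulVec_mulVec, ← add_mulVec, hclosed, mul_fromCols_mulVec_sumElim]
end

section
/- If in addition to the hypotheses of the data-based closed-loop representation one has X₁·G₂ = 0, then the closed-loop update on z = [x; q] equals Ā·x − D·W₀·G₂·q + D·w, i.e., the nonlinear channel matrix reduces to Ē = −D·W₀·G₂. -/
open Matrix

/-!
Substituting the data equation `X₁ = A Z₀ + B U₀ + D W₀` and the right inverse `Z₀ [G₁ G₂] = I`
into `A + B K` with `K = U₀ [G₁ G₂]` gives `A + B K = (X₁ − D W₀) [G₁ G₂]`, so the closed loop on
`z = [x; q]` is `Ā x + Ē q + D w`; the extra constraint `X₁ G₂ = 0` turns `Ē` into `−D W₀ G₂`.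
-/

section DataBased

variable {R m n p r s T : Type*} [CommRing R] [Fintype n] [Fintype p] [Fintype r] [Fintype T]
  [DecidableEq n]

theorem add_mul_feedback_eq_of_data {A : Matrix m n R} {B : Matrix m p R} {D : Matrix m r R}
    {U0 : Matrix p T R} {Z0 : Matrix n T R} {X1 : Matrix m T R} {W0 : Matrix r T R}
    {G : Matrix T n R} {K : Matrix p n R}
    (hK : K = U0 * G) (hI : Z0 * G = 1) (hdata : X1 = A * Z0 + B * U0 + D * W0) :
    A + B * K = (X1 - D * W0) * G := by
  rw [hK, hdata, add_sub_cancel_right, Matrix.add_mul, Matrix.mul_assoc, Matrix.mul_assoc, hI,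
    Matrix.mul_one]

theorem sub_mul_eq_neg_of_mul_eq_zero {X1 : Matrix m T R} {E : Matrix m T R} {G : Matrix T s R}
    (h : X1 * G = 0) : (X1 - E) * G = -(E * G) := by
  rw [Matrix.sub_mul, h, zero_sub]

end DataBased

/-- Under the data-based closed-loop representation hypotheses together with
`X₁ G₂ = 0`, the closed-loop update equals `Ā x − D W₀ G₂ q + D w`, i.e. the
nonlinear channel matrix reduces to `Ē = −D W₀ G₂`. -/
theorem stmt_9 {nx k nu nw T : ℕ}
    (A : Matrix (Fin nx) (Fin nx ⊕ Fin k) ℝ) (B : Matrix (Fin nx) (Fin nu) ℝ)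
    (D : Matrix (Fin nx) (Fin nw) ℝ)
    (U0 : Matrix (Fin nu) (Fin T) ℝ) (Z0 : Matrix (Fin nx ⊕ Fin k) (Fin T) ℝ)
    (X1 : Matrix (Fin nx) (Fin T) ℝ) (W0 : Matrix (Fin nw) (Fin T) ℝ)
    (G₁ : Matrix (Fin T) (Fin nx) ℝ) (G₂ : Matrix (Fin T) (Fin k) ℝ)
    (K : Matrix (Fin nu) (Fin nx ⊕ Fin k) ℝ)
    (hK : K = U0 * fromCols G₁ G₂)
    (hI : Z0 * fromCols G₁ G₂ = 1)
    (hdata : X1 = A * Z0 + B * U0 + D * W0)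
    (hG₂ : X1 * G₂ = 0)
    (x : Fin nx → ℝ) (q : Fin k → ℝ) (w : Fin nw → ℝ) :
    A.mulVec (Sum.elim x q) + B.mulVec (K.mulVec (Sum.elim x q)) + D.mulVec w
      = ((X1 - D * W0) * G₁).mulVec x - (D * W0 * G₂).mulVec q + D.mulVec w := by
  calc A.mulVec (Sum.elim x q) + B.mulVec (K.mulVec (Sum.elim x q)) + D.mulVec w
      = (A + B * K).mulVec (Sum.elim x q) + D.mulVec w := by
        rw [Matrix.add_mulVec, Matrix.mulVec_mulVec]
    _ = ((X1 - D * W0) * G₁).mulVec x + ((X1 - D * W0) * G₂).mulVec q + D.mulVec w := by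
        rw [add_mul_feedback_eq_of_data hK hI hdata, Matrix.mul_fromCols,
          Matrix.fromCols_mulVec_sumElim]
    _ = ((X1 - D * W0) * G₁).mulVec x - (D * W0 * G₂).mulVec q + D.mulVec w := by
        rw [sub_mul_eq_neg_of_mul_eq_zero hG₂, Matrix.neg_mulVec, ← sub_eq_add_neg]
end

section
/- Let P ≻ 0, γ > 0, ε₁, ε₂ > 0, and suppose the 7×7 block LMI of the control-design theorem holds: the symmetric block matrix with diagonal blocks P, γI_{n_w}, γI_{n_x}, (ε₁/(1+ε₁))P, (1/ε₁)P, ε₂I_T, (1/ε₂)I_{n_w}, and off-diagonal blocks P (1,3-block), (X₁Y)ᵀ (1,4-block), Yᵀ (1,6-block), Dᵀ (2,5-block), DΔ (4,7-block) (all other off-diagonal blocks zero) is positive definite. Then for every W₀ with W₀·W₀ᵀ ⪯ Δ·Δᵀ, the matrix Ā = (X₁ − D·W₀)·Y·P⁻¹ satisfies (1 + ε₁⁻¹)·Āᵀ·P⁻¹·Ā − P⁻¹ + γ⁻¹·I ≺ 0 and ε₁·Dᵀ·P⁻¹·D − γ·I ≺ 0. -/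
/-!
Both inequalities are positivity of the LMI's quadratic form at suitable test vectors.
For the second, the vector `(0, u, 0, 0, -ε₁P⁻¹Du, 0, 0)` turns the form into
`γ|u|² - ε₁ uᵀDᵀP⁻¹Du`. For the first, substituting `x' = Px` reduces the claim to
`(1+ε₁⁻¹) pᵀPp + γ⁻¹|Px|² < xᵀPx` with `Pp = (X₁ - DW₀)Yx`. The test vector
`(x, 0, -γ⁻¹Px, -(1+ε₁⁻¹)p, 0, -ε₂⁻¹Yx, ε₂(1+ε₁⁻¹)ΔᵀDᵀp)` leaves the cross term coming from
`DW₀Y`, and Young's inequality together with `W₀W₀ᵀ ⪯ ΔΔᵀ` absorbs it.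
-/

open Matrix

section
variable {n m : Type*} [Fintype n]

lemma dotProduct_mulVec_eq_transpose_mulVec_dotProduct [Fintype m] (A : Matrix n m ℝ) (u : n → ℝ)
    (v : m → ℝ) : u ⬝ᵥ A *ᵥ v = Aᵀ *ᵥ u ⬝ᵥ v := by
  rw [dotProduct_mulVec, mulVec_transpose]

lemma neg_two_mul_dotProduct_le {ε : ℝ} (hε : 0 < ε) (y z : n → ℝ) :
    -(2 * (y ⬝ᵥ z)) ≤ ε⁻¹ * (y ⬝ᵥ y) + ε * (z ⬝ᵥ z) := by
  have hsq : 0 ≤ (y + ε • z) ⬝ᵥ (y + ε • z) := by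
    simpa using dotProduct_self_star_nonneg (y + ε • z)
  have hexp : ε⁻¹ * ((y + ε • z) ⬝ᵥ (y + ε • z))
      = ε⁻¹ * (y ⬝ᵥ y) + ε * (z ⬝ᵥ z) + 2 * (y ⬝ᵥ z) := by
    simp only [dotProduct_add, add_dotProduct, dotProduct_smul, smul_dotProduct, smul_eq_mul,
      dotProduct_comm z y]
    field_simp
    ring
  linarith [mul_nonneg (inv_nonneg.2 hε.le) hsq]

lemma dotProduct_self_transpose_mulVec_le {l : Type*} [Fintype m] [Fintype l]
    {A : Matrix n m ℝ} {B : Matrix n l ℝ} (h : (A * Aᵀ - B * Bᵀ).PosSemidef) (d : n → ℝ) :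
    Bᵀ *ᵥ d ⬝ᵥ Bᵀ *ᵥ d ≤ Aᵀ *ᵥ d ⬝ᵥ Aᵀ *ᵥ d := by
  have := h.dotProduct_mulVec_nonneg d
  rwa [star_trivial, sub_mulVec, dotProduct_sub, ← mulVec_mulVec, ← mulVec_mulVec,
    dotProduct_mulVec_eq_transpose_mulVec_dotProduct A,
    dotProduct_mulVec_eq_transpose_mulVec_dotProduct B, sub_nonneg] at this

lemma mulVec_nonsing_inv_mulVec [DecidableEq n] {A : Matrix n n ℝ} (hA : IsUnit A.det)
    (v : n → ℝ) : A *ᵥ A⁻¹ *ᵥ v = v := by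
  rw [mulVec_mulVec, mul_nonsing_inv A hA, one_mulVec]

lemma nonsing_inv_mulVec_mulVec [DecidableEq n] {A : Matrix n n ℝ} (hA : IsUnit A.det)
    (v : n → ℝ) : A⁻¹ *ᵥ A *ᵥ v = v := by
  rw [mulVec_mulVec, nonsing_inv_mul A hA, one_mulVec]

lemma isHermitian_transpose_mul_mul {A : Matrix n n ℝ} (B : Matrix n m ℝ) (hA : A.IsHermitian) :
    (Bᵀ * A * B).IsHermitian := by
  simpa only [conjTranspose_eq_transpose_of_trivial] using isHermitian_conjTranspose_mul_mul B hA

end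

section
variable {n m t : Type*} [Fintype n] [Fintype m] [Fintype t] [DecidableEq n] [DecidableEq m]
  [DecidableEq t] {P : Matrix n n ℝ} {γ ε₁ ε₂ : ℝ} {X1 : Matrix n t ℝ} {Y : Matrix t n ℝ}
  {D : Matrix n m ℝ} {Δ : Matrix m m ℝ}

variable (P γ ε₁ ε₂ X1 Y D Δ) in
noncomputable def controlLMI : Matrix (n ⊕ m ⊕ n ⊕ n ⊕ n ⊕ t ⊕ m) (n ⊕ m ⊕ n ⊕ n ⊕ n ⊕ t ⊕ m) ℝ :=
  fromBlocks P
    (fromCols 0 (fromCols P (fromCols (X1 * Y)ᵀ (fromCols 0 (fromCols Yᵀ 0)))))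
    (fromCols 0 (fromCols P (fromCols (X1 * Y)ᵀ (fromCols 0 (fromCols Yᵀ 0)))))ᵀ
    (fromBlocks (γ • 1)
      (fromCols 0 (fromCols 0 (fromCols Dᵀ 0)))
      (fromCols 0 (fromCols 0 (fromCols Dᵀ 0)))ᵀ
      (fromBlocks (γ • 1) 0 0
        (fromBlocks ((ε₁ / (1 + ε₁)) • P)
          (fromCols 0 (fromCols 0 (D * Δ)))
          (fromCols 0 (fromCols 0 (D * Δ)))ᵀ
          (fromBlocks ((1 / ε₁) • P) 0 0
            (fromBlocks (ε₂ • 1) 0 0 ((1 / ε₂) • 1))))))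

theorem Matrix.PosDef.controlLMI_quadForm_pos (h : (controlLMI P γ ε₁ ε₂ X1 Y D Δ).PosDef)
    (x : n → ℝ) (w : m → ℝ) (z₃ z₄ z₅ : n → ℝ) (z₆ : t → ℝ) (z₇ : m → ℝ)
    (hxw : x ≠ 0 ∨ w ≠ 0) :
    0 < x ⬝ᵥ P *ᵥ x + 2 * (x ⬝ᵥ P *ᵥ z₃) + 2 * (z₄ ⬝ᵥ (X1 * Y) *ᵥ x) + 2 * (z₆ ⬝ᵥ Y *ᵥ x)
      + γ * (w ⬝ᵥ w) + 2 * (z₅ ⬝ᵥ D *ᵥ w) + γ * (z₃ ⬝ᵥ z₃)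
      + ε₁ / (1 + ε₁) * (z₄ ⬝ᵥ P *ᵥ z₄) + 2 * (z₄ ⬝ᵥ (D * Δ) *ᵥ z₇)
      + ε₁⁻¹ * (z₅ ⬝ᵥ P *ᵥ z₅) + ε₂ * (z₆ ⬝ᵥ z₆) + ε₂⁻¹ * (z₇ ⬝ᵥ z₇) := by
  set v := Sum.elim x (Sum.elim w (Sum.elim z₃ (Sum.elim z₄ (Sum.elim z₅ (Sum.elim z₆ z₇)))))
  have hv : v ≠ 0 := by
    rintro hv
    rcases hxw with hx | hw
    · exact hx (funext fun i => congrFun hv (Sum.inl i))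
    · exact hw (funext fun i => congrFun hv (Sum.inr (Sum.inl i)))
  have := h.dotProduct_mulVec_pos hv
  simp only [v, star_trivial, controlLMI, fromBlocks_mulVec, fromCols_mulVec_sumElim,
    transpose_fromCols, fromRows_mulVec, sumElim_dotProduct_sumElim, dotProduct_add, smul_mulVec,
    one_mulVec, zero_mulVec, dotProduct_zero, dotProduct_smul, smul_eq_mul, add_zero, zero_add,
    transpose_zero, dotProduct_transpose_mulVec, one_div, Sum.elim_comp_inl,
    Sum.elim_comp_inr] at this
  linarith

theorem Matrix.PosDef.controlLMI_gain (h : (controlLMI P γ ε₁ ε₂ X1 Y D Δ).PosDef)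
    (hP : P.PosDef) :
    (-(ε₁ • (Dᵀ * P⁻¹ * D) - γ • (1 : Matrix m m ℝ))).PosDef := by
  refine .of_dotProduct_mulVec_pos ?_ fun u hu => ?_
  · exact (((isHermitian_transpose_mul_mul D hP.isHermitian.inv).smul (.all ε₁)).sub
      (isHermitian_one.smul (.all γ))).neg
  set w := P⁻¹ *ᵥ D *ᵥ u
  have hPw : P *ᵥ w = D *ᵥ u := mulVec_nonsing_inv_mulVec hP.det_pos.ne'.isUnit _
  have hform := h.controlLMI_quadForm_pos 0 u 0 0 (-ε₁ • w) 0 0 (.inr hu)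
  simp only [dotProduct_zero, mulVec_zero, mulVec_smul, smul_dotProduct,
    dotProduct_smul, hPw, smul_eq_mul, mul_zero, add_zero, zero_add] at hform
  have hgoal : star u ⬝ᵥ -(ε₁ • (Dᵀ * P⁻¹ * D) - γ • 1) *ᵥ u
      = γ * (u ⬝ᵥ u) - ε₁ * (w ⬝ᵥ D *ᵥ u) := by
    simp only [star_trivial, neg_mulVec, sub_mulVec, smul_mulVec, one_mulVec, ← mulVec_mulVec,
      dotProduct_neg, dotProduct_sub, dotProduct_smul, smul_eq_mul, dotProduct_transpose_mulVec]
    ring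
  rw [hgoal]
  field_simp at hform
  linarith

theorem Matrix.PosDef.controlLMI_robust_quadForm_pos
    (h : (controlLMI P γ ε₁ ε₂ X1 Y D Δ).PosDef) (hP : Pᵀ = P) (hγ : 0 < γ) (hε₁ : 0 < ε₁)
    (hε₂ : 0 < ε₂) {W0 : Matrix m t ℝ} (hW0 : (Δ * Δᵀ - W0 * W0ᵀ).PosSemidef) {x p : n → ℝ}
    (hx : x ≠ 0) (hp : P *ᵥ p = ((X1 - D * W0) * Y) *ᵥ x) :
    (1 + ε₁⁻¹) * (p ⬝ᵥ P *ᵥ p) + γ⁻¹ * (P *ᵥ x ⬝ᵥ P *ᵥ x) < x ⬝ᵥ P *ᵥ x := by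
  set c := 1 + ε₁⁻¹
  set y := Y *ᵥ x
  set d := Dᵀ *ᵥ p
  set g := Δᵀ *ᵥ d
  set e := W0ᵀ *ᵥ d
  have hPx : x ⬝ᵥ P *ᵥ P *ᵥ x = P *ᵥ x ⬝ᵥ P *ᵥ x := by
    rw [dotProduct_mulVec_eq_transpose_mulVec_dotProduct, hP]
  have hX : p ⬝ᵥ (X1 * Y) *ᵥ x = p ⬝ᵥ P *ᵥ p + e ⬝ᵥ y := by
    have hsplit : X1 * Y = (X1 - D * W0) * Y + D * (W0 * Y) := by
      rw [Matrix.sub_mul, Matrix.mul_assoc, sub_add_cancel]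
    rw [hsplit, add_mulVec, ← hp, dotProduct_add, ← mulVec_mulVec, ← mulVec_mulVec,
      dotProduct_mulVec_eq_transpose_mulVec_dotProduct D,
      dotProduct_mulVec_eq_transpose_mulVec_dotProduct W0]
  have hDΔ : p ⬝ᵥ (D * Δ) *ᵥ g = g ⬝ᵥ g := by
    rw [← mulVec_mulVec, dotProduct_mulVec_eq_transpose_mulVec_dotProduct D,
      dotProduct_mulVec_eq_transpose_mulVec_dotProduct Δ]
  have hyoung := neg_two_mul_dotProduct_le hε₂ y (c • e)
  have heg : e ⬝ᵥ e ≤ g ⬝ᵥ g := dotProduct_self_transpose_mulVec_le hW0 d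
  have hquad := h.controlLMI_quadForm_pos x 0 (-γ⁻¹ • P *ᵥ x) (-c • p) 0 (-ε₂⁻¹ • y) ((ε₂ * c) • g)
    (.inl hx)
  simp only [dotProduct_zero, mulVec_zero, mulVec_smul, smul_dotProduct, dotProduct_smul,
    smul_eq_mul, mul_zero, add_zero, hPx, hX, hDΔ, dotProduct_comm e y] at hquad hyoung
  have hform : 0 < x ⬝ᵥ P *ᵥ x - γ⁻¹ * (P *ᵥ x ⬝ᵥ P *ᵥ x) - c * (p ⬝ᵥ P *ᵥ p)
      - 2 * c * (y ⬝ᵥ e) - ε₂⁻¹ * (y ⬝ᵥ y) - ε₂ * c ^ 2 * (g ⬝ᵥ g) := by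
    convert hquad using 1
    simp only [c, y]
    field_simp
    ring
  have hscaled : ε₂ * c ^ 2 * (e ⬝ᵥ e) ≤ ε₂ * c ^ 2 * (g ⬝ᵥ g) := by gcongr
  linarith

theorem Matrix.PosDef.controlLMI_robust (h : (controlLMI P γ ε₁ ε₂ X1 Y D Δ).PosDef)
    (hP : P.PosDef) (hγ : 0 < γ) (hε₁ : 0 < ε₁) (hε₂ : 0 < ε₂) {W0 : Matrix m t ℝ}
    (hW0 : (Δ * Δᵀ - W0 * W0ᵀ).PosSemidef) :
    (-((1 + ε₁⁻¹) • (((X1 - D * W0) * Y * P⁻¹)ᵀ * P⁻¹ * ((X1 - D * W0) * Y * P⁻¹))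
      - P⁻¹ + γ⁻¹ • (1 : Matrix n n ℝ))).PosDef := by
  have hPdet : IsUnit P.det := hP.det_pos.ne'.isUnit
  have hPsymm : Pᵀ = P := by
    simpa only [conjTranspose_eq_transpose_of_trivial] using hP.isHermitian.eq
  set B := (X1 - D * W0) * Y
  refine .of_dotProduct_mulVec_pos ?_ fun x' hx' => ?_
  · exact ((((isHermitian_transpose_mul_mul _ hP.isHermitian.inv).smul (.all _)).sub
      hP.isHermitian.inv).add (isHermitian_one.smul (.all _))).neg
  obtain ⟨x, rfl⟩ : ∃ x, P *ᵥ x = x' := ⟨P⁻¹ *ᵥ x', mulVec_nonsing_inv_mulVec hPdet x'⟩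
  have hx : x ≠ 0 := by
    rintro rfl
    simp at hx'
  set p := P⁻¹ *ᵥ B *ᵥ x
  have hp : P *ᵥ p = B *ᵥ x := mulVec_nonsing_inv_mulVec hPdet (B *ᵥ x)
  have hbound := h.controlLMI_robust_quadForm_pos hPsymm hγ hε₁ hε₂ hW0 hx hp
  have hq : star (P *ᵥ x) ⬝ᵥ (-((1 + ε₁⁻¹) • ((B * P⁻¹)ᵀ * P⁻¹ * (B * P⁻¹)) - P⁻¹ + γ⁻¹ • 1))
      *ᵥ (P *ᵥ x) = x ⬝ᵥ P *ᵥ x - γ⁻¹ * (P *ᵥ x ⬝ᵥ P *ᵥ x) - (1 + ε₁⁻¹) * (p ⬝ᵥ P *ᵥ p) := by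
    simp only [star_trivial, neg_mulVec, add_mulVec, sub_mulVec, smul_mulVec, one_mulVec,
      ← mulVec_mulVec, dotProduct_neg, dotProduct_add, dotProduct_sub, dotProduct_smul,
      smul_eq_mul, dotProduct_transpose_mulVec, nonsing_inv_mulVec_mulVec hPdet, ← hp,
      dotProduct_comm (P *ᵥ x) x]
    ring
  rw [hq]
  linarith

end

/-- If the 7×7 block LMI of the control-design theorem holds (diagonal blocks
`P, γI, γI, (ε₁/(1+ε₁))P, (1/ε₁)P, ε₂I_T, (1/ε₂)I`, off-diagonal blocks `P` (1,3),
`(X₁Y)ᵀ` (1,4), `Yᵀ` (1,6), `Dᵀ` (2,5), `DΔ` (4,7), all others zero), then for every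
`W₀` with `W₀W₀ᵀ ⪯ ΔΔᵀ` the matrix `Ā = (X₁ − DW₀) Y P⁻¹` satisfies
`(1+ε₁⁻¹)ĀᵀP⁻¹Ā − P⁻¹ + γ⁻¹I ≺ 0` and `ε₁DᵀP⁻¹D − γI ≺ 0`. -/
theorem stmt_15 {nx nw T : ℕ}
    (P : Matrix (Fin nx) (Fin nx) ℝ) (hP : P.PosDef)
    (γ ε₁ ε₂ : ℝ) (hγ : 0 < γ) (hε₁ : 0 < ε₁) (hε₂ : 0 < ε₂)
    (X1 : Matrix (Fin nx) (Fin T) ℝ) (Y : Matrix (Fin T) (Fin nx) ℝ)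
    (D : Matrix (Fin nx) (Fin nw) ℝ) (Δ : Matrix (Fin nw) (Fin nw) ℝ)
    -- row 1 off-diagonal blocks (columns 2..7)
    (hLMI : (fromBlocks P
        (fromCols (0 : Matrix (Fin nx) (Fin nw) ℝ)
          (fromCols P
            (fromCols (X1 * Y)ᵀ
              (fromCols (0 : Matrix (Fin nx) (Fin nx) ℝ)
                (fromCols Yᵀ (0 : Matrix (Fin nx) (Fin nw) ℝ))))))
        (fromCols (0 : Matrix (Fin nx) (Fin nw) ℝ)
          (fromCols P
            (fromCols (X1 * Y)ᵀ
              (fromCols (0 : Matrix (Fin nx) (Fin nx) ℝ)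
                (fromCols Yᵀ (0 : Matrix (Fin nx) (Fin nw) ℝ))))))ᵀ
        -- lower-right 6×6 block (rows/cols 2..7)
        (fromBlocks (γ • (1 : Matrix (Fin nw) (Fin nw) ℝ))
          -- row 2 off-diagonal (columns 3..7): only (2,5) = Dᵀ nonzero
          (fromCols (0 : Matrix (Fin nw) (Fin nx) ℝ)
            (fromCols (0 : Matrix (Fin nw) (Fin nx) ℝ)
              (fromCols Dᵀ (0 : Matrix (Fin nw) (Fin T ⊕ Fin nw) ℝ))))
          (fromCols (0 : Matrix (Fin nw) (Fin nx) ℝ)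
            (fromCols (0 : Matrix (Fin nw) (Fin nx) ℝ)
              (fromCols Dᵀ (0 : Matrix (Fin nw) (Fin T ⊕ Fin nw) ℝ))))ᵀ
          (fromBlocks (γ • (1 : Matrix (Fin nx) (Fin nx) ℝ)) 0 0
            (fromBlocks ((ε₁ / (1 + ε₁)) • P)
              -- row 4 off-diagonal (columns 5..7): only (4,7) = DΔ nonzero
              (fromCols (0 : Matrix (Fin nx) (Fin nx) ℝ)
                (fromCols (0 : Matrix (Fin nx) (Fin T) ℝ) (D * Δ)))
              (fromCols (0 : Matrix (Fin nx) (Fin nx) ℝ)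
                (fromCols (0 : Matrix (Fin nx) (Fin T) ℝ) (D * Δ)))ᵀ
              (fromBlocks ((1 / ε₁) • P) 0 0
                (fromBlocks (ε₂ • (1 : Matrix (Fin T) (Fin T) ℝ)) 0 0
                  ((1 / ε₂) • (1 : Matrix (Fin nw) (Fin nw) ℝ)))))))).PosDef) :
    ∀ W0 : Matrix (Fin nw) (Fin T) ℝ, (Δ * Δᵀ - W0 * W0ᵀ).PosSemidef →
      (-((1 + ε₁⁻¹) • (((X1 - D * W0) * Y * P⁻¹)ᵀ * P⁻¹ * ((X1 - D * W0) * Y * P⁻¹))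
          - P⁻¹ + γ⁻¹ • (1 : Matrix (Fin nx) (Fin nx) ℝ))).PosDef
      ∧ (-(ε₁ • (Dᵀ * P⁻¹ * D) - γ • (1 : Matrix (Fin nw) (Fin nw) ℝ))).PosDef := by
  intro W0 hW0
  have h : (controlLMI P γ ε₁ ε₂ X1 Y D Δ).PosDef := hLMI
  exact ⟨h.controlLMI_robust hP hγ hε₁ hε₂ hW0, h.controlLMI_gain hP⟩
end
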